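/- Let f be γ-strongly convex, β-smooth with L-Lipschitz Hessian and minimizer x*, and κ = β/γ. If g_t satisfies ‖∇²f(x_t)g_t − ∇f(x_t)‖₂ ≤ (1/(4κ))‖∇f(x_t)‖₂ and x_{t+1} = x_t − g_t, then ‖x_{t+1} − x*‖₂ ≤ (1/4)‖x_t − x*‖₂ + (L/γ)‖x_t − x*‖₂². -/

import Mathlib

/-!
Strong convexity makes the Hessian coercive, `γ‖v‖ ≤ ‖∇²f(x_t) v‖`, so it suffices to bound
`∇²f(x_t)(x_{t+1} - x*) = [∇²f(x_t)(x_t - x*) - ∇f(x_t)] - [∇²f(x_t) g_t - ∇f(x_t)]`.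
Since `∇f(x*) = 0`, the first bracket is a first-order Taylor remainder of `∇f` around `x_t`, of
size at most `L‖x_t - x*‖²` by the Lipschitz Hessian. The second is at most
`(γ/(4β))‖∇f(x_t)‖ ≤ (γ/4)‖x_t - x*‖`, because smoothness gives `‖∇f(x)‖ ≤ β‖x - x*‖`.
-/

open RealInnerProductSpace

theorem norm_fderiv_apply_sub_sub_le_of_lipschitz_fderiv {E G : Type*} [NormedAddCommGroup E]
    [NormedSpace ℝ E] [NormedAddCommGroup G] [NormedSpace ℝ G] {F : E → G} {L : ℝ}
    (hF : Differentiable ℝ F) (hL : 0 ≤ L)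
    (hLip : ∀ x y, ‖fderiv ℝ F x - fderiv ℝ F y‖ ≤ L * ‖x - y‖) (x y : E) :
    ‖fderiv ℝ F y (y - x) - (F y - F x)‖ ≤ L * ‖y - x‖ ^ 2 := by
  have h := (convex_closedBall y ‖x - y‖).norm_image_sub_le_of_norm_fderiv_le'
    (fun z _ => hF z) (fun z hz => (hLip z y).trans (mul_le_mul_of_nonneg_left
      (mem_closedBall_iff_norm.1 hz) hL)) (Metric.mem_closedBall_self (norm_nonneg _))
    (mem_closedBall_iff_norm.2 le_rfl)
  calc ‖fderiv ℝ F y (y - x) - (F y - F x)‖ = ‖F x - F y - fderiv ℝ F y (x - y)‖ := by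
        rw [← neg_sub y x, map_neg]; congr 1; abel
    _ ≤ L * ‖x - y‖ * ‖x - y‖ := h
    _ = L * ‖y - x‖ ^ 2 := by rw [norm_sub_rev]; ring

section Calculus

variable {E : Type*} [NormedAddCommGroup E] [InnerProductSpace ℝ E]

theorem ContDiff.contDiff_gradient [CompleteSpace E] {f : E → ℝ} {m n : WithTop ℕ∞}
    (hf : ContDiff ℝ n f) (hmn : m + 1 ≤ n) : ContDiff ℝ m (gradient f) :=
  (InnerProductSpace.toDual ℝ E).symm.contDiff.comp (hf.fderiv_right hmn)

theorem IsLocalMin.gradient_eq_zero [CompleteSpace E] {f : E → ℝ} {a : E} (h : IsLocalMin f a) :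
    gradient f a = 0 := by
  simp [gradient, h.fderiv_eq_zero]

theorem mul_norm_sq_le_inner_apply_of_hasFDerivAt {F : E → E} {H : E →L[ℝ] E} {x : E} {γ : ℝ}
    (hF : HasFDerivAt F H x) (hmono : ∀ y, γ * ‖y - x‖ ^ 2 ≤ ⟪F y - F x, y - x⟫) (v : E) :
    γ * ‖v‖ ^ 2 ≤ ⟪H v, v⟫ := by
  -- `x` minimizes `y ↦ ⟪v, F y⟫ - γ ⟪v, y⟫` on the segment `[x, x + v]`.
  set ψ : E → ℝ := fun y => ⟪v, F y⟫ - γ * ⟪v, y⟫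
  have hψ : HasFDerivAt ψ ((innerSL ℝ v).comp H - γ • innerSL ℝ v) x :=
    ((innerSL ℝ v).hasFDerivAt.comp x hF).sub ((innerSL ℝ v).hasFDerivAt.const_mul γ)
  have hmin : IsMinOn ψ (segment ℝ x (x + v)) x := by
    rw [segment_eq_image']
    rintro _ ⟨t, ⟨ht0, -⟩, rfl⟩
    have h := hmono (x + t • (x + v - x))
    simp only [add_sub_cancel_left, inner_sub_left, real_inner_smul_right, norm_smul,
      Real.norm_eq_abs, abs_of_nonneg ht0] at h
    show ψ x ≤ ψ (x + t • (x + v - x))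
    simp only [ψ, add_sub_cancel_left, inner_add_right, real_inner_smul_right,
      real_inner_self_eq_norm_sq, real_inner_comm (F _) v]
    rcases ht0.eq_or_lt with rfl | ht
    · simp
    · have key : t * (γ * t * ‖v‖ ^ 2) ≤ t * (⟪F (x + t • v), v⟫ - ⟪F x, v⟫) := by
        linear_combination h
      linarith [le_of_mul_le_mul_left key ht]
  have := hmin.localize.hasFDerivWithinAt_nonneg hψ.hasFDerivWithinAt
    (mem_posTangentConeAt_of_segment_subset le_rfl)
  simpa [real_inner_comm v, real_inner_self_eq_norm_sq] using this

theorem mul_norm_le_norm_apply_of_hasFDerivAt {F : E → E} {H : E →L[ℝ] E} {x : E} {γ : ℝ}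
    (hF : HasFDerivAt F H x) (hmono : ∀ y, γ * ‖y - x‖ ^ 2 ≤ ⟪F y - F x, y - x⟫) (v : E) :
    γ * ‖v‖ ≤ ‖H v‖ := by
  rcases eq_or_ne v 0 with rfl | hv
  · simp
  have hv' : 0 < ‖v‖ := norm_pos_iff.2 hv
  have h := (mul_norm_sq_le_inner_apply_of_hasFDerivAt hF hmono v).trans
    (real_inner_le_norm (H v) v)
  nlinarith

end Calculus

section Convexity

variable {E : Type*} [NormedAddCommGroup E] [InnerProductSpace ℝ E] [CompleteSpace E]
  {f : E → ℝ} {γ β : ℝ}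

theorem mul_norm_sq_le_inner_gradient_sub_gradient
    (hsc : ∀ x y, f x + ⟪gradient f x, y - x⟫ + γ / 2 * ‖y - x‖ ^ 2 ≤ f y) (x y : E) :
    γ * ‖y - x‖ ^ 2 ≤ ⟪gradient f y - gradient f x, y - x⟫ := by
  have hxy := hsc x y
  have hyx := hsc y x
  rw [← neg_sub y x, inner_neg_right, norm_neg] at hyx
  rw [inner_sub_left]
  linarith

theorem norm_sq_gradient_le_of_smooth (hβ : 0 < β)
    (hsmooth : ∀ x y, f y ≤ f x + ⟪gradient f x, y - x⟫ + β / 2 * ‖y - x‖ ^ 2)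
    {xstar : E} (hmin : ∀ y, f xstar ≤ f y) (x : E) :
    ‖gradient f x‖ ^ 2 ≤ 2 * β * (f x - f xstar) := by
  -- one gradient step of length `1/β` decreases `f` by at least `‖∇f x‖² / (2β)`
  have h := hsmooth x (x - β⁻¹ • gradient f x)
  rw [sub_sub_cancel_left, ← neg_smul, real_inner_smul_right, real_inner_self_eq_norm_sq,
    norm_smul, Real.norm_eq_abs, abs_neg, abs_of_pos (inv_pos.2 hβ)] at h
  have key : β * (f xstar - f x) ≤ β * (-β⁻¹ * ‖gradient f x‖ ^ 2 +
      β / 2 * (β⁻¹ * ‖gradient f x‖) ^ 2) := by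
    gcongr
    linarith [hmin (x - β⁻¹ • gradient f x)]
  field_simp at key
  linarith

theorem norm_gradient_le_of_smooth (hβ : 0 < β)
    (hsmooth : ∀ x y, f y ≤ f x + ⟪gradient f x, y - x⟫ + β / 2 * ‖y - x‖ ^ 2)
    {xstar : E} (hmin : ∀ y, f xstar ≤ f y) (x : E) :
    ‖gradient f x‖ ≤ β * ‖x - xstar‖ := by
  have hgap : f x - f xstar ≤ β / 2 * ‖x - xstar‖ ^ 2 := by
    have h := hsmooth xstar x
    rw [IsLocalMin.gradient_eq_zero (.of_forall hmin), inner_zero_left] at h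
    linarith
  have hsq : ‖gradient f x‖ ^ 2 ≤ (β * ‖x - xstar‖) ^ 2 := by
    nlinarith [norm_sq_gradient_le_of_smooth hβ hsmooth hmin x]
  exact (pow_le_pow_iff_left₀ (norm_nonneg _) (by positivity) two_ne_zero).1 hsq

end Convexity

theorem stmt_15 {d : ℕ} (f : EuclideanSpace ℝ (Fin d) → ℝ)
    (hf : ContDiff ℝ 2 f) (γ β L : ℝ) (hγ : 0 < γ) (hβ : 0 < β) (hL : 0 < L)
    (hsc : ∀ x y : EuclideanSpace ℝ (Fin d),
      f x + ⟪gradient f x, y - x⟫ + γ / 2 * ‖y - x‖ ^ 2 ≤ f y)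
    (hsmooth : ∀ x y : EuclideanSpace ℝ (Fin d),
      f y ≤ f x + ⟪gradient f x, y - x⟫ + β / 2 * ‖y - x‖ ^ 2)
    (hLip : ∀ x y : EuclideanSpace ℝ (Fin d),
      ‖fderiv ℝ (gradient f) x - fderiv ℝ (gradient f) y‖ ≤ L * ‖x - y‖)
    (xstar : EuclideanSpace ℝ (Fin d)) (hmin : ∀ y, f xstar ≤ f y)
    (xt gt : EuclideanSpace ℝ (Fin d))
    (hg : ‖fderiv ℝ (gradient f) xt gt - gradient f xt‖
      ≤ 1 / (4 * (β / γ)) * ‖gradient f xt‖) :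
    ‖(xt - gt) - xstar‖ ≤ 1 / 4 * ‖xt - xstar‖ + L / γ * ‖xt - xstar‖ ^ 2 := by
  set H := fderiv ℝ (gradient f) xt
  have hdiff : Differentiable ℝ (gradient f) :=
    (hf.contDiff_gradient (by norm_num)).differentiable one_ne_zero
  have htaylor : ‖H (xt - xstar) - gradient f xt‖ ≤ L * ‖xt - xstar‖ ^ 2 := by
    simpa [IsLocalMin.gradient_eq_zero (.of_forall hmin)] using
      norm_fderiv_apply_sub_sub_le_of_lipschitz_fderiv hdiff hL.le hLip xstar xt
  have hinexact : ‖H gt - gradient f xt‖ ≤ γ / 4 * ‖xt - xstar‖ :=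
    calc ‖H gt - gradient f xt‖ ≤ 1 / (4 * (β / γ)) * ‖gradient f xt‖ := hg
      _ ≤ 1 / (4 * (β / γ)) * (β * ‖xt - xstar‖) := by
          gcongr; exact norm_gradient_le_of_smooth hβ hsmooth hmin xt
      _ = γ / 4 * ‖xt - xstar‖ := by field_simp
  have hsplit : H ((xt - gt) - xstar) =
      (H (xt - xstar) - gradient f xt) - (H gt - gradient f xt) := by
    rw [sub_right_comm, map_sub]; abel
  have hcoercive : γ * ‖(xt - gt) - xstar‖ ≤ ‖H ((xt - gt) - xstar)‖ :=
    mul_norm_le_norm_apply_of_hasFDerivAt (hdiff xt).hasFDerivAt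
      (mul_norm_sq_le_inner_gradient_sub_gradient hsc xt) _
  have hbound : γ * ‖(xt - gt) - xstar‖ ≤ L * ‖xt - xstar‖ ^ 2 + γ / 4 * ‖xt - xstar‖ := by
    rw [hsplit] at hcoercive
    exact hcoercive.trans ((norm_sub_le _ _).trans (add_le_add htaylor hinexact))
  calc ‖(xt - gt) - xstar‖ ≤ (L * ‖xt - xstar‖ ^ 2 + γ / 4 * ‖xt - xstar‖) / γ :=
        (le_div_iff₀' hγ).2 hbound
    _ = 1 / 4 * ‖xt - xstar‖ + L / γ * ‖xt - xstar‖ ^ 2 := by field_simp; ring
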